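/- Let f_n, f : ℝ³ → ℝ be in L¹(ℝ³) ∩ L^{5/3}(ℝ³) with ‖f_n − f‖_{L¹} → 0 and ‖f_n − f‖_{L^{5/3}} → 0 as n → ∞. Then ∫_{ℝ³} Φ_{f_n}(x) f_n(x) dx → ∫_{ℝ³} Φ_f(x) f(x) dx as n → ∞. -/

import Mathlib

open MeasureTheory Real Filter Topology

/-- The Newtonian potential of `f : ℝ³ → ℝ`: `Φ_f(x) = ∫ f(y)/‖x - y‖ dy`. -/
noncomputable def newtonianPotential (f : EuclideanSpace ℝ (Fin 3) → ℝ)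
    (x : EuclideanSpace ℝ (Fin 3)) : ℝ :=
  ∫ y, f y / ‖x - y‖

open scoped ENNReal NNReal

abbrev E3 := EuclideanSpace ℝ (Fin 3)

noncomputable def Kc : ℝ≥0∞ :=
  (∫⁻ z in Metric.ball (0 : E3) 1, ((‖z‖₊ : ℝ≥0∞)⁻¹) ^ ((5:ℝ)/2)) ^ ((2:ℝ)/5)

lemma Kc_ne_top : Kc ≠ ⊤ := by
  rw [Kc]
  apply ENNReal.rpow_ne_top_of_nonneg (by norm_num)
  set V : ℝ≥0∞ := volume (Metric.ball (0:E3) 1) with hV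
  set q : ℝ≥0∞ := (2:ℝ≥0∞) ^ (-(1:ℝ)/2) with hq
  set A : ℕ → Set E3 := fun k => Metric.ball (0:E3) ((2⁻¹:ℝ)^k) \ Metric.ball 0 ((2⁻¹:ℝ)^(k+1))
    with hA
  have hcover : Metric.ball (0:E3) 1 ⊆ ({0} : Set E3) ∪ ⋃ k, A k := by
    intro z hz
    rcases eq_or_ne z 0 with rfl | hz0
    · exact Or.inl rfl
    right
    have hz1 : ‖z‖ < 1 := by simpa [mem_ball_zero_iff] using hz
    have hzpos : 0 < ‖z‖ := norm_pos_iff.mpr hz0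
    have hex : ∃ n : ℕ, (2⁻¹:ℝ)^n ≤ ‖z‖ := by
      obtain ⟨n, hn⟩ := exists_pow_lt_of_lt_one hzpos (by norm_num : (2⁻¹:ℝ) < 1)
      exact ⟨n, hn.le⟩
    have hn1 : (2⁻¹:ℝ)^(Nat.find hex) ≤ ‖z‖ := Nat.find_spec hex
    have hnne : Nat.find hex ≠ 0 := by
      intro h
      rw [h] at hn1
      simp at hn1
      linarith
    refine Set.mem_iUnion.mpr ⟨Nat.find hex - 1, ?_, ?_⟩
    · have hmin := Nat.find_min hex (Nat.pred_lt hnne)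
      have : ‖z‖ < (2⁻¹:ℝ)^(Nat.find hex - 1) := not_le.mp hmin
      simpa [mem_ball_zero_iff] using this
    · have hsucc : Nat.find hex - 1 + 1 = Nat.find hex := Nat.succ_pred_eq_of_ne_zero hnne
      rw [hsucc]
      simp only [Metric.mem_ball, dist_zero_right, not_lt]
      exact hn1
  have h0 : ∫⁻ z in ({0} : Set E3), ((‖z‖₊ : ℝ≥0∞)⁻¹) ^ ((5:ℝ)/2) ∂volume = 0 :=
    setLIntegral_measure_zero _ _ (measure_singleton 0)
  have hterm : ∀ k : ℕ, ∫⁻ z in A k, ((‖z‖₊ : ℝ≥0∞)⁻¹) ^ ((5:ℝ)/2) ∂volume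
      ≤ (2:ℝ≥0∞) ^ ((5:ℝ)/2) * V * q ^ k := by
    intro k
    have hpw : ∀ z ∈ A k, ((‖z‖₊ : ℝ≥0∞)⁻¹) ^ ((5:ℝ)/2)
        ≤ ((2:ℝ≥0∞) ^ (k+1)) ^ ((5:ℝ)/2) := by
      intro z hz
      have hge : (2⁻¹:ℝ)^(k+1) ≤ ‖z‖ := by
        have := hz.2
        simpa [mem_ball_zero_iff, not_lt] using this
      have h1 : ENNReal.ofReal ((2⁻¹:ℝ)^(k+1)) ≤ (‖z‖₊ : ℝ≥0∞) := by
        rw [show (‖z‖₊ : ℝ≥0∞) = ENNReal.ofReal ‖z‖ from (ofReal_norm_eq_enorm z).symm]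
        exact ENNReal.ofReal_le_ofReal hge
      have h2 : (‖z‖₊ : ℝ≥0∞)⁻¹ ≤ (ENNReal.ofReal ((2⁻¹:ℝ)^(k+1)))⁻¹ :=
        ENNReal.inv_le_inv' h1
      have h3 : (ENNReal.ofReal ((2⁻¹:ℝ)^(k+1)))⁻¹ = (2:ℝ≥0∞) ^ (k+1) := by
        rw [ENNReal.ofReal_pow (by norm_num)]
        rw [ENNReal.ofReal_inv_of_pos (by norm_num)]
        rw [show ENNReal.ofReal 2 = (2:ℝ≥0∞) by norm_num, ENNReal.inv_pow, inv_inv]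
      exact ENNReal.rpow_le_rpow (h3 ▸ h2) (by norm_num)
    calc ∫⁻ z in A k, ((‖z‖₊ : ℝ≥0∞)⁻¹) ^ ((5:ℝ)/2) ∂volume
        ≤ ∫⁻ _ in A k, ((2:ℝ≥0∞) ^ (k+1)) ^ ((5:ℝ)/2) ∂volume := by
          apply lintegral_mono_ae
          filter_upwards [ae_restrict_mem (measurableSet_ball.diff measurableSet_ball)] with z hz
          exact hpw z hz
      _ = ((2:ℝ≥0∞) ^ (k+1)) ^ ((5:ℝ)/2) * volume (A k) := setLIntegral_const _ _
      _ ≤ ((2:ℝ≥0∞) ^ (k+1)) ^ ((5:ℝ)/2) * (ENNReal.ofReal (((2⁻¹:ℝ)^k) ^ 3) * V) := by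
          gcongr
          refine le_trans (measure_mono Set.diff_subset) ?_
          rw [Measure.addHaar_ball_of_pos volume 0 (by positivity : (0:ℝ) < (2⁻¹:ℝ)^k)]
          rw [finrank_euclideanSpace_fin]
      _ = (2:ℝ≥0∞) ^ ((5:ℝ)/2) * V * q ^ k := by
          have e1 : ((2:ℝ≥0∞) ^ (k+1)) ^ ((5:ℝ)/2) = (2:ℝ≥0∞) ^ ((((k:ℝ))+1) * (5/2)) := by
            rw [← ENNReal.rpow_natCast 2 (k+1), ← ENNReal.rpow_mul]
            push_cast
            ring_nf
          have e2 : ENNReal.ofReal (((2⁻¹:ℝ)^k) ^ 3) = (2:ℝ≥0∞) ^ (-(3:ℝ) * k) := by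
            rw [← pow_mul, ENNReal.ofReal_pow (by norm_num),
              ENNReal.ofReal_inv_of_pos (by norm_num)]
            rw [show ENNReal.ofReal 2 = (2:ℝ≥0∞) by norm_num]
            rw [← ENNReal.rpow_natCast (2⁻¹ : ℝ≥0∞) (k*3), ← ENNReal.rpow_neg_one,
              ← ENNReal.rpow_mul]
            push_cast
            ring_nf
          have e3 : q ^ k = (2:ℝ≥0∞) ^ ((-(1:ℝ)/2) * k) := by
            rw [hq, ← ENNReal.rpow_natCast ((2:ℝ≥0∞) ^ (-(1:ℝ)/2)) k, ← ENNReal.rpow_mul]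
          rw [e1, e2, e3, ← mul_assoc,
            ← ENNReal.rpow_add _ _ (by norm_num) (by norm_num),
            mul_right_comm ((2:ℝ≥0∞) ^ ((5:ℝ)/2)) V,
            ← ENNReal.rpow_add _ _ (by norm_num) (by norm_num)]
          congr 2
          ring
  have hsum : ∫⁻ z in Metric.ball (0:E3) 1, ((‖z‖₊ : ℝ≥0∞)⁻¹) ^ ((5:ℝ)/2) ∂volume
      ≤ (2:ℝ≥0∞) ^ ((5:ℝ)/2) * V * (1 - q)⁻¹ := by
    calc ∫⁻ z in Metric.ball (0:E3) 1, ((‖z‖₊ : ℝ≥0∞)⁻¹) ^ ((5:ℝ)/2) ∂volume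
        ≤ ∫⁻ z in (({0} : Set E3) ∪ ⋃ k, A k), ((‖z‖₊ : ℝ≥0∞)⁻¹) ^ ((5:ℝ)/2) ∂volume :=
          lintegral_mono_set hcover
      _ ≤ (∫⁻ z in ({0} : Set E3), ((‖z‖₊ : ℝ≥0∞)⁻¹) ^ ((5:ℝ)/2) ∂volume)
          + ∫⁻ z in ⋃ k, A k, ((‖z‖₊ : ℝ≥0∞)⁻¹) ^ ((5:ℝ)/2) ∂volume := lintegral_union_le _ _ _
      _ ≤ 0 + ∑' k, ∫⁻ z in A k, ((‖z‖₊ : ℝ≥0∞)⁻¹) ^ ((5:ℝ)/2) ∂volume := by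
          rw [h0]
          gcongr
          exact lintegral_iUnion_le _ _
      _ ≤ 0 + ∑' k, (2:ℝ≥0∞) ^ ((5:ℝ)/2) * V * q ^ k := by
          gcongr with k
          exact hterm k
      _ = (2:ℝ≥0∞) ^ ((5:ℝ)/2) * V * (1 - q)⁻¹ := by
          rw [zero_add, ENNReal.tsum_mul_left, ENNReal.tsum_geometric]
  refine ne_top_of_le_ne_top ?_ hsum
  have hq1 : q < 1 := ENNReal.rpow_lt_one_of_one_lt_of_neg (by norm_num) (by norm_num)
  have h1q : (1 - q) ≠ 0 := by
    simp only [ne_eq, tsub_eq_zero_iff_le, not_le]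
    exact hq1
  apply ENNReal.mul_ne_top
  apply ENNReal.mul_ne_top
  · exact ENNReal.rpow_ne_top_of_nonneg (by norm_num) (by norm_num)
  · exact (measure_ball_lt_top).ne
  · exact ENNReal.inv_ne_top.mpr h1q

lemma lint_bound (g : E3 → ℝ) (hg : AEStronglyMeasurable g volume) (x : E3) :
    ∫⁻ y, (‖g y / ‖x - y‖‖₊ : ℝ≥0∞) ∂volume
      ≤ Kc * eLpNorm g (5/3) volume + eLpNorm g 1 volume := by
  set k : E3 → ℝ≥0∞ := fun y => (‖x - y‖₊ : ℝ≥0∞)⁻¹ with hk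
  have hgm : AEMeasurable (fun y => (‖g y‖₊ : ℝ≥0∞)) volume := hg.enorm
  have hkm : Measurable k := by
    apply Measurable.inv
    exact (measurable_const.sub measurable_id).nnnorm.coe_nnreal_ennreal
  have key : ∀ y, (‖g y / ‖x - y‖‖₊ : ℝ≥0∞) ≤ (‖g y‖₊ : ℝ≥0∞) * k y := by
    intro y
    rcases eq_or_ne (‖x - y‖) 0 with h | h
    · simp [h]
    · have hnn : ‖x - y‖₊ ≠ 0 := by simpa [nnnorm_eq_zero'] using h
      rw [hk]
      rw [nnnorm_div, nnnorm_norm, div_eq_mul_inv, ENNReal.coe_mul, ENNReal.coe_inv hnn]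
  calc ∫⁻ y, (‖g y / ‖x - y‖‖₊ : ℝ≥0∞) ∂volume
      ≤ ∫⁻ y, (‖g y‖₊ : ℝ≥0∞) * k y ∂volume := lintegral_mono key
    _ = (∫⁻ y in Metric.ball x 1, (‖g y‖₊ : ℝ≥0∞) * k y ∂volume)
        + ∫⁻ y in (Metric.ball x 1)ᶜ, (‖g y‖₊ : ℝ≥0∞) * k y ∂volume :=
        (lintegral_add_compl _ measurableSet_ball).symm
    _ ≤ Kc * eLpNorm g (5/3) volume + eLpNorm g 1 volume := by
        gcongr
        · -- near part, Hölder
          have hpq : Real.HolderConjugate ((5:ℝ)/3) ((5:ℝ)/2) := ⟨by norm_num, by norm_num, by norm_num⟩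
          have H := ENNReal.lintegral_mul_le_Lp_mul_Lq (volume.restrict (Metric.ball x 1)) hpq
            hgm.restrict hkm.aemeasurable
          refine H.trans ?_
          rw [mul_comm]
          have e1 : (1 / ((5:ℝ)/3)) = (3:ℝ)/5 := by norm_num
          have e2 : (1 / ((5:ℝ)/2)) = (2:ℝ)/5 := by norm_num
          rw [e1, e2]
          gcongr ?_ * ?_
          · -- kernel factor equals Kc
            apply le_of_eq
            have T : MeasurePreserving (fun y : E3 => x - y) volume volume :=
              Measure.measurePreserving_sub_left volume x
            have hF : Measurable (fun z : E3 => ((‖z‖₊ : ℝ≥0∞)⁻¹) ^ ((5:ℝ)/2)) :=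
              (measurable_nnnorm.coe_nnreal_ennreal.inv).pow_const _
            have hpre : (fun y : E3 => x - y) ⁻¹' (Metric.ball (0:E3) 1) = Metric.ball x 1 := by
              ext y
              simp [Metric.mem_ball, dist_eq_norm, norm_sub_rev]
            rw [Kc]
            congr 1
            conv_rhs => rw [← T.map_eq]
            rw [setLIntegral_map measurableSet_ball hF T.measurable, hpre]
          · -- g factor ≤ eLpNorm g (5/3)
            have : eLpNorm g (5/3) volume
                = (∫⁻ y, (‖g y‖₊ : ℝ≥0∞) ^ ((5:ℝ)/3) ∂volume) ^ ((3:ℝ)/5) := by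
              rw [eLpNorm_eq_lintegral_rpow_enorm_toReal (by norm_num) ((ENNReal.div_lt_top (by norm_num) (by norm_num)).ne)]
              norm_num [ENNReal.toReal_div]
              rfl
            rw [this]
            exact ENNReal.rpow_le_rpow (setLIntegral_le_lintegral _ _) (by norm_num)
        · -- far part
          refine le_trans ?_ (le_of_eq eLpNorm_one_eq_lintegral_enorm.symm)
          refine le_trans ?_ (setLIntegral_le_lintegral (Metric.ball x 1)ᶜ (fun y => (‖g y‖₊ : ℝ≥0∞)))
          apply lintegral_mono_ae
          filter_upwards [ae_restrict_mem measurableSet_ball.compl] with y hy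
          have h1 : (1:ℝ≥0) ≤ ‖x - y‖₊ := by
            have : (1:ℝ) ≤ ‖x - y‖ := by
              have hy' : ¬ dist y x < 1 := by simpa [Metric.mem_ball] using hy
              calc (1:ℝ) ≤ dist y x := not_lt.mp hy'
                _ = ‖x - y‖ := by rw [dist_eq_norm, norm_sub_rev]
            rw [← NNReal.coe_le_coe]; simpa using this
          have : k y ≤ 1 := by
            rw [hk]
            simp only
            rw [ENNReal.inv_le_one]
            exact_mod_cast h1
          calc (‖g y‖₊ : ℝ≥0∞) * k y ≤ (‖g y‖₊ : ℝ≥0∞) * 1 := by gcongr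
            _ = _ := mul_one _


noncomputable def Cg (g : E3 → ℝ) : ℝ≥0∞ := Kc * eLpNorm g (5/3) volume + eLpNorm g 1 volume

lemma Cg_ne_top (g : E3 → ℝ) (hg1 : MemLp g 1 volume) (hg53 : MemLp g (5/3) volume) :
    Cg g ≠ ⊤ :=
  ENNReal.add_ne_top.mpr ⟨ENNReal.mul_ne_top Kc_ne_top hg53.eLpNorm_ne_top, hg1.eLpNorm_ne_top⟩

lemma integrable_ker (g : E3 → ℝ) (hg1 : MemLp g 1 volume) (hg53 : MemLp g (5/3) volume)
    (x : E3) : Integrable (fun y => g y / ‖x - y‖) volume := by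
  constructor
  · have hm : Measurable fun y : E3 => ‖x - y‖⁻¹ :=
      ((measurable_const.sub measurable_id).norm).inv
    have := hg1.aestronglyMeasurable.mul hm.aestronglyMeasurable
    simp only [div_eq_mul_inv]; exact this
  · exact lt_of_le_of_lt (lint_bound g hg1.aestronglyMeasurable x)
      (Cg_ne_top g hg1 hg53).lt_top

lemma pot_bound (g : E3 → ℝ) (hg : AEStronglyMeasurable g volume) (x : E3) :
    (‖newtonianPotential g x‖₊ : ℝ≥0∞) ≤ Cg g :=
  le_trans (enorm_integral_le_lintegral_enorm _) (lint_bound g hg x)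

lemma pot_bound_real (g : E3 → ℝ) (hg1 : MemLp g 1 volume) (hg53 : MemLp g (5/3) volume)
    (x : E3) : ‖newtonianPotential g x‖ ≤ (Cg g).toReal := by
  have h := pot_bound g hg1.aestronglyMeasurable x
  have := ENNReal.toReal_mono (Cg_ne_top g hg1 hg53) h
  simpa using this

lemma pot_meas (g : E3 → ℝ) (hg : AEStronglyMeasurable g volume) :
    AEStronglyMeasurable (newtonianPotential g) volume := by
  set g' := hg.mk g with hg'
  have hge : newtonianPotential g = newtonianPotential g' := by
    funext x
    exact integral_congr_ae (hg.ae_eq_mk.mono fun y hy => by simp only [hy, hg'])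
  rw [hge]
  have hF : StronglyMeasurable (fun p : E3 × E3 => g' p.2 / ‖p.1 - p.2‖) := by
    apply Measurable.stronglyMeasurable
    exact (hg.stronglyMeasurable_mk.measurable.comp measurable_snd).div
      ((continuous_fst.sub continuous_snd).norm.measurable)
  exact hF.integral_prod_right'.aestronglyMeasurable

lemma energy_integrable (g h : E3 → ℝ) (hg1 : MemLp g 1 volume) (hg53 : MemLp g (5/3) volume)
    (hh1 : MemLp h 1 volume) :
    Integrable (fun x => newtonianPotential g x * h x) volume := by
  apply Integrable.bdd_mul (memLp_one_iff_integrable.mp hh1)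
    (pot_meas g hg1.aestronglyMeasurable)
  exact Filter.Eventually.of_forall fun x => pot_bound_real g hg1 hg53 x

lemma energy_bound (g h : E3 → ℝ) (hg1 : MemLp g 1 volume) (hg53 : MemLp g (5/3) volume) :
    (‖∫ x, newtonianPotential g x * h x‖₊ : ℝ≥0∞) ≤ Cg g * eLpNorm h 1 volume := by
  refine le_trans (enorm_integral_le_lintegral_enorm _) ?_
  rw [eLpNorm_one_eq_lintegral_enorm]
  calc ∫⁻ x, (‖newtonianPotential g x * h x‖₊ : ℝ≥0∞) ∂volume
      = ∫⁻ x, (‖newtonianPotential g x‖₊ : ℝ≥0∞) * (‖h x‖₊ : ℝ≥0∞) ∂volume := by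
        simp_rw [nnnorm_mul, ENNReal.coe_mul]
    _ ≤ ∫⁻ x, Cg g * (‖h x‖₊ : ℝ≥0∞) ∂volume := by
        apply lintegral_mono
        intro x
        exact mul_le_mul_left (pot_bound g hg1.aestronglyMeasurable x) _
    _ = Cg g * ∫⁻ x, (‖h x‖₊ : ℝ≥0∞) ∂volume := lintegral_const_mul' _ _ (Cg_ne_top g hg1 hg53)

theorem stmt11 (fn : ℕ → EuclideanSpace ℝ (Fin 3) → ℝ) (f : EuclideanSpace ℝ (Fin 3) → ℝ)
    (hfn1 : ∀ n, MemLp (fn n) 1 volume) (hfn53 : ∀ n, MemLp (fn n) (5 / 3) volume)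
    (hf1 : MemLp f 1 volume) (hf53 : MemLp f (5 / 3) volume)
    (hconv1 : Tendsto (fun n => eLpNorm (fn n - f) 1 volume) atTop (𝓝 0))
    (hconv53 : Tendsto (fun n => eLpNorm (fn n - f) (5 / 3) volume) atTop (𝓝 0)) :
    Tendsto (fun n => ∫ x, newtonianPotential (fn n) x * fn n x) atTop
      (𝓝 (∫ x, newtonianPotential f x * f x)) := by
  have hd1 : ∀ n, MemLp (fn n - f) 1 volume := fun n => (hfn1 n).sub hf1
  have hd53 : ∀ n, MemLp (fn n - f) (5/3) volume := fun n => (hfn53 n).sub hf53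
  have hdecomp : ∀ n, (∫ x, newtonianPotential (fn n) x * fn n x)
      - ∫ x, newtonianPotential f x * f x
      = (∫ x, newtonianPotential (fn n - f) x * fn n x)
        + ∫ x, newtonianPotential f x * (fn n x - f x) := by
    intro n
    have hpot : ∀ x, newtonianPotential (fn n) x
        = newtonianPotential (fn n - f) x + newtonianPotential f x := by
      intro x
      rw [newtonianPotential, newtonianPotential, newtonianPotential]
      rw [← integral_add (integrable_ker _ (hd1 n) (hd53 n) x) (integrable_ker f hf1 hf53 x)]
      congr 1
      funext y
      simp only [Pi.sub_apply]
      rw [← add_div, sub_add_cancel]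
    have e1 : ∫ x, newtonianPotential (fn n) x * fn n x
        = (∫ x, newtonianPotential (fn n - f) x * fn n x)
          + ∫ x, newtonianPotential f x * fn n x := by
      rw [← integral_add (energy_integrable _ _ (hd1 n) (hd53 n) (hfn1 n))
        (energy_integrable _ _ hf1 hf53 (hfn1 n))]
      congr 1
      funext x
      rw [hpot x, add_mul]
    have e2 : ∫ x, newtonianPotential f x * (fn n x - f x)
        = (∫ x, newtonianPotential f x * fn n x) - ∫ x, newtonianPotential f x * f x := by
      rw [← integral_sub (energy_integrable f _ hf1 hf53 (hfn1 n))
        (energy_integrable f f hf1 hf53 hf1)]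
      congr 1
      funext x
      ring
    rw [e1, e2]
    ring
  have hbound : ∀ n, (‖(∫ x, newtonianPotential (fn n) x * fn n x)
      - ∫ x, newtonianPotential f x * f x‖₊ : ℝ≥0∞)
      ≤ Cg (fn n - f) * (eLpNorm (fn n - f) 1 volume + eLpNorm f 1 volume)
        + Cg f * eLpNorm (fn n - f) 1 volume := by
    intro n
    rw [hdecomp n]
    calc (‖(∫ x, newtonianPotential (fn n - f) x * fn n x)
          + ∫ x, newtonianPotential f x * (fn n x - f x)‖₊ : ℝ≥0∞)
        ≤ (‖∫ x, newtonianPotential (fn n - f) x * fn n x‖₊ : ℝ≥0∞)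
          + (‖∫ x, newtonianPotential f x * (fn n x - f x)‖₊ : ℝ≥0∞) := by
          exact_mod_cast nnnorm_add_le _ _
      _ ≤ Cg (fn n - f) * eLpNorm (fn n) 1 volume + Cg f * eLpNorm (fn n - f) 1 volume := by
          gcongr
          · exact energy_bound _ _ (hd1 n) (hd53 n)
          · exact energy_bound f (fn n - f) hf1 hf53
      _ ≤ _ := by
          gcongr
          have : fn n = (fn n - f) + f := by funext x; simp
          calc eLpNorm (fn n) 1 volume = eLpNorm ((fn n - f) + f) 1 volume := by rw [← this]
            _ ≤ _ := eLpNorm_add_le (hd1 n).aestronglyMeasurable hf1.aestronglyMeasurable le_rfl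
  have hlim : Tendsto (fun n => Cg (fn n - f) * (eLpNorm (fn n - f) 1 volume
      + eLpNorm f 1 volume) + Cg f * eLpNorm (fn n - f) 1 volume) atTop (𝓝 0) := by
    have h1 : Tendsto (fun n => Kc * eLpNorm (fn n - f) (5/3) volume) atTop (𝓝 0) := by
      simpa using ENNReal.Tendsto.const_mul hconv53 (Or.inr Kc_ne_top)
    have h2 : Tendsto (fun n => Cg (fn n - f)) atTop (𝓝 0) := by
      simpa [Cg] using h1.add hconv1
    have h3 : Tendsto (fun n => eLpNorm (fn n - f) 1 volume + eLpNorm f 1 volume) atTop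
        (𝓝 (eLpNorm f 1 volume)) := by
      simpa using hconv1.add (tendsto_const_nhds (x := eLpNorm f 1 volume))
    have h4 := ENNReal.Tendsto.mul h2 (Or.inr hf1.eLpNorm_ne_top) h3
      (Or.inr ENNReal.zero_ne_top)
    have h5 : Tendsto (fun n => Cg f * eLpNorm (fn n - f) 1 volume) atTop (𝓝 0) := by
      simpa using ENNReal.Tendsto.const_mul hconv1 (Or.inr (Cg_ne_top f hf1 hf53))
    simpa using h4.add h5
  have henorm : Tendsto (fun n => (‖(∫ x, newtonianPotential (fn n) x * fn n x)
      - ∫ x, newtonianPotential f x * f x‖₊ : ℝ≥0∞)) atTop (𝓝 0) :=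
    tendsto_of_tendsto_of_tendsto_of_le_of_le tendsto_const_nhds hlim (fun n => zero_le) hbound
  rw [tendsto_iff_edist_tendsto_0]
  simpa [edist_eq_enorm_sub, enorm_eq_nnnorm] using henorm
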